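/- arXiv:2603.29826 — 3 statements merged into one kernel-verified Lean document; each statement's English description precedes it below -/
import Mathlib

section
/- Let A be a complete normed algebra over ℂ with unit, let x, y ∈ A, and let c ∈ ℂ. If the commutator satisfies x·y − y·x = c • y, then exp(x) · y = exp(c) • (y · exp(x)); equivalently, exp(x) · y · exp(−x) = exp(c) • y. -/
/-!
The commutator relation says that `y` intertwines `x + c` with `x`: `x * y = y * (x + c)`.
Hence `x ^ n * y = y * (x + c) ^ n` for every `n`, and summing the exponential series gives
`exp x * y = y * exp (x + c)`; since the scalar `c` is central, `exp (x + c) = exp c • exp x`.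
-/

open NormedSpace

theorem semiconjBy_add_algebraMap_of_commutator_eq_smul {R A : Type*} [CommSemiring R] [Ring A]
    [Algebra R A] {x y : A} {c : R} (h : x * y - y * x = c • y) :
    SemiconjBy y (x + algebraMap R A c) x := by
  rw [SemiconjBy, mul_add, ← Algebra.commutes, ← Algebra.smul_def, ← sub_eq_iff_eq_add'.mp h]

theorem exp_add_algebraMap {𝕂 A : Type*} [RCLike 𝕂] [NormedRing A] [NormedAlgebra 𝕂 A]
    [CompleteSpace A] (x : A) (c : 𝕂) :
    exp (x + algebraMap 𝕂 A c) = exp c • exp x := by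
  -- `exp` does not depend on the `ℚ`-algebra structure, which `exp_add_of_commute` asks for.
  let : NormedAlgebra ℚ A := .restrictScalars ℚ 𝕂 A
  rw [exp_add_of_commute (Algebra.commute_algebraMap_right c x), ← algebraMap_exp_comm,
    ← Algebra.commutes, ← Algebra.smul_def]

/-- In a complete normed unital `ℂ`-algebra, if `x·y − y·x = c • y`, then
`exp(x)·y = exp(c) • (y·exp(x))`; equivalently `exp(x)·y·exp(−x) = exp(c) • y`. -/
theorem exp_conj_of_commutator_smul {A : Type*} [NormedRing A] [NormedAlgebra ℂ A]
    [CompleteSpace A] (x y : A) (c : ℂ) (h : x * y - y * x = c • y) :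
    NormedSpace.exp x * y = Complex.exp c • (y * NormedSpace.exp x) ∧
      NormedSpace.exp x * y * NormedSpace.exp (-x) = Complex.exp c • y := by
  let : NormedAlgebra ℚ A := .restrictScalars ℚ ℂ A
  have hshift : exp x * y = Complex.exp c • (y * exp x) := by
    rw [← (semiconjBy_add_algebraMap_of_commutator_eq_smul h).exp_right.eq, exp_add_algebraMap,
      mul_smul_comm, Complex.exp_eq_exp_ℂ]
  refine ⟨hshift, ?_⟩
  rw [hshift, smul_mul_assoc, mul_assoc, ← exp_add_of_commute (Commute.neg_right (.refl x)),
    add_neg_cancel, exp_zero, mul_one]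
end

section
/- Let A be a unital C*-algebra and X ∈ A a selfadjoint element whose spectrum is contained in the open interval (−1, ∞). Let q be a real number and N a natural number. Then the continuous functional calculus satisfies the exact operator-level remainder factorization: cfc(x ↦ (1+x)^q, X) = Σ_{n=0}^{N} [ (∏_{i=0}^{n−1}(q−i)) / n! ] • Xⁿ + X^{N+1} · cfc(x ↦ (∏_{i=0}^{N}(q−i))/N! · ∫₀¹ (1−t)^N (1+t·x)^{q−N−1} dt, X). -/
open Finset Set intervalIntegral MeasureTheory

/-!
Write `I_M(r, x) = ∫₀¹ (1 - t)^M (1 + t x)^r dt`. Integrating `t ↦ (1 - t)^M (1 + t x)^r`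
by parts gives `(1 + x)^q = 1 + q x I_0(q - 1, x)` and
`(M + 1) I_M(r, x) = 1 + r x I_{M+1}(r - 1, x)`, which by induction on `N` is the scalar
Taylor formula with integral remainder on `(-1, ∞)`. Both sides of that identity are continuous
on the spectrum, so applying the continuous functional calculus to it, termwise on the
polynomial part, lifts it to `X`.
-/

section ContinuousFunctionalCalculus

variable {R A : Type*} {p : A → Prop} [CommSemiring R] [StarRing R] [MetricSpace R]
  [IsTopologicalSemiring R] [ContinuousStar R] [Ring A] [StarRing A] [TopologicalSpace A]
  [Algebra R A] [ContinuousFunctionalCalculus R A p]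

lemma cfc_eq_sum_smul_pow_add_pow_mul (s : Finset ℕ) (c : ℕ → R) (m : ℕ) {f g : R → R}
    {a : A} (ha : p a) (hg : ContinuousOn g (spectrum R a))
    (hfg : ∀ x ∈ spectrum R a, f x = ∑ n ∈ s, c n * x ^ n + x ^ m * g x) :
    cfc f a = ∑ n ∈ s, c n • a ^ n + a ^ m * cfc g a := by
  rw [cfc_congr hfg, cfc_add .., cfc_mul .., cfc_pow_id a m ha]
  congr 1
  rw [← sum_fn, cfc_sum ..]
  exact sum_congr rfl fun n _ ↦ by rw [cfc_const_mul .., cfc_pow_id a _ ha]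

end ContinuousFunctionalCalculus

lemma one_add_mul_pos_of_mem_Icc {x t : ℝ} (hx : -1 < x) (ht : t ∈ Icc (0 : ℝ) 1) :
    0 < 1 + t * x := by
  rcases le_or_gt 0 x with h | h
  · nlinarith [ht.1]
  · nlinarith [ht.2]

/-- The paper's remainder amplitude `Φ_N`. -/
noncomputable def rpowRemainderIntegral (M : ℕ) (r x : ℝ) : ℝ :=
  ∫ t in (0 : ℝ)..1, (1 - t) ^ M * (1 + t * x) ^ r

section RemainderIntegral

variable {x : ℝ}

lemma continuousOn_one_sub_pow_mul_one_add_mul_rpow (hx : -1 < x) (M : ℕ) (r : ℝ) :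
    ContinuousOn (fun t : ℝ ↦ (1 - t) ^ M * (1 + t * x) ^ r) (uIcc 0 1) := by
  rw [Set.uIcc_of_le zero_le_one]
  exact (continuousOn_const.sub continuousOn_id).pow M |>.mul <|
    ContinuousOn.rpow_const (by fun_prop) fun t ht ↦ .inl (one_add_mul_pos_of_mem_Icc hx ht).ne'

/-- For `M = 0` the truncated exponent `M - 1` is harmless: its coefficient `M` vanishes. -/
lemma zero_pow_mul_one_add_rpow_sub_one_eq (hx : -1 < x) (M : ℕ) (r : ℝ) :
    (0 : ℝ) ^ M * (1 + x) ^ r - 1 =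
      r * x * rpowRemainderIntegral M (r - 1) x - M * rpowRemainderIntegral (M - 1) r x := by
  have hderiv : ∀ t ∈ uIcc (0 : ℝ) 1, HasDerivAt (fun t ↦ (1 - t) ^ M * (1 + t * x) ^ r)
      (r * x * ((1 - t) ^ M * (1 + t * x) ^ (r - 1)) -
        M * ((1 - t) ^ (M - 1) * (1 + t * x) ^ r)) t := by
    intro t ht
    rw [Set.uIcc_of_le zero_le_one] at ht
    have hpow := (hasDerivAt_pow M (1 - t)).comp t ((hasDerivAt_id t).const_sub 1)
    have hrpow := ((hasDerivAt_mul_const x).const_add 1).rpow_const (p := r)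
      (.inl (one_add_mul_pos_of_mem_Icc hx ht).ne')
    exact (hpow.mul hrpow).congr_deriv (by simp only [Function.comp_def]; ring)
  have hint (k : ℕ) (s : ℝ) :
      IntervalIntegrable (fun t ↦ (1 - t) ^ k * (1 + t * x) ^ s) volume 0 1 :=
    (continuousOn_one_sub_pow_mul_one_add_mul_rpow hx k s).intervalIntegrable
  have := integral_eq_sub_of_hasDerivAt hderiv (((hint M (r - 1)).const_mul _).sub
    ((hint (M - 1) r).const_mul _))
  rw [integral_sub ((hint M (r - 1)).const_mul _) ((hint (M - 1) r).const_mul _),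
    intervalIntegral.integral_const_mul, intervalIntegral.integral_const_mul] at this
  simpa [rpowRemainderIntegral] using this.symm

lemma succ_mul_rpowRemainderIntegral (hx : -1 < x) (M : ℕ) (r : ℝ) :
    (M + 1) * rpowRemainderIntegral M r x =
      1 + r * x * rpowRemainderIntegral (M + 1) (r - 1) x := by
  have := zero_pow_mul_one_add_rpow_sub_one_eq hx (M + 1) r
  rw [zero_pow M.succ_ne_zero, zero_mul, Nat.add_sub_cancel] at this
  push_cast at this
  linarith

lemma continuousOn_rpowRemainderIntegral (M : ℕ) (r : ℝ) :
    ContinuousOn (rpowRemainderIntegral M r) (Ioi (-1)) := by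
  rw [continuousOn_iff_continuous_domRestrict]
  -- Clamping `t` to `[0, 1]` makes the integrand continuous on all of `Ioi (-1) × ℝ`.
  let clamp : ℝ → Icc (0 : ℝ) 1 := projIcc 0 1 zero_le_one
  have hcont : Continuous (Function.uncurry fun (x : Ioi (-1 : ℝ)) (t : ℝ) ↦
      (1 - (clamp t : ℝ)) ^ M * (1 + clamp t * (x : ℝ)) ^ r) :=
    (by fun_prop : Continuous fun p : Ioi (-1 : ℝ) × ℝ ↦ (1 - (clamp p.2 : ℝ)) ^ M).mul <|
      (by fun_prop : Continuous fun p : Ioi (-1 : ℝ) × ℝ ↦ 1 + clamp p.2 * (p.1 : ℝ))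
        |>.rpow_const fun p ↦ .inl (one_add_mul_pos_of_mem_Icc p.1.2 (clamp p.2).2).ne'
  refine (continuous_parametric_intervalIntegral_of_continuous' (μ := volume) hcont 0 1).congr
    fun x ↦ ?_
  refine integral_congr fun t ht ↦ ?_
  rw [Set.uIcc_of_le zero_le_one] at ht
  simp [clamp, projIcc_of_mem _ ht]

/-- The paper's remainder amplitude `Φ_N`. -/
noncomputable def rpowRemainder (q : ℝ) (N : ℕ) (x : ℝ) : ℝ :=
  (∏ i ∈ range (N + 1), (q - i)) / N.factorial * rpowRemainderIntegral N (q - N - 1) x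

lemma continuousOn_rpowRemainder (q : ℝ) (N : ℕ) :
    ContinuousOn (rpowRemainder q N) (Ioi (-1)) :=
  continuousOn_const.mul (continuousOn_rpowRemainderIntegral _ _)

lemma one_add_rpow_eq_one_add_mul_rpowRemainder (hx : -1 < x) (q : ℝ) :
    (1 + x) ^ q = 1 + x * rpowRemainder q 0 x := by
  have h := zero_pow_mul_one_add_rpow_sub_one_eq hx 0 q
  simp only [pow_zero, one_mul, CharP.cast_eq_zero, zero_mul, sub_zero] at h
  simp only [rpowRemainder, zero_add, range_one, Finset.prod_singleton, Nat.factorial_zero,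
    Nat.cast_one, div_one, CharP.cast_eq_zero, sub_zero]
  linear_combination h

lemma rpowRemainder_eq_add_mul_rpowRemainder_succ (hx : -1 < x) (q : ℝ) (N : ℕ) :
    rpowRemainder q N x =
      (∏ i ∈ range (N + 1), (q - i)) / (N + 1).factorial + x * rpowRemainder q (N + 1) x := by
  have h := succ_mul_rpowRemainderIntegral hx N (q - N - 1)
  simp only [rpowRemainder, prod_range_succ _ (N + 1), Nat.factorial_succ]
  push_cast
  rw [show q - (N + 1) - 1 = q - N - 1 - 1 by ring]
  field_simp
  linear_combination (∏ i ∈ range (N + 1), (q - i)) * h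

lemma one_add_rpow_eq_sum_add_pow_mul_rpowRemainder (hx : -1 < x) (q : ℝ) (N : ℕ) :
    (1 + x) ^ q = ∑ n ∈ range (N + 1), (∏ i ∈ range n, (q - i)) / n.factorial * x ^ n +
      x ^ (N + 1) * rpowRemainder q N x := by
  induction N with
  | zero => simp [one_add_rpow_eq_one_add_mul_rpowRemainder hx q]
  | succ N ih =>
    rw [ih, rpowRemainder_eq_add_mul_rpowRemainder_succ hx, sum_range_succ _ (N + 1)]
    ring

end RemainderIntegral

/-- Operator-level Taylor remainder factorization for the fractional power of a
selfadjoint element `X` of a unital C*-algebra with spectrum in `(−1, ∞)`: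
`cfc ((1+·)^q) X = Σ_{n≤N} binom(q,n) • Xⁿ + X^{N+1} · cfc (Φ_N) X`, where `Φ_N` is the
integral remainder amplitude. -/
theorem cfc_rpow_taylor_remainder {A : Type*} [CStarAlgebra A]
    (X : A) (hX : IsSelfAdjoint X) (hspec : spectrum ℝ X ⊆ Set.Ioi (-1 : ℝ))
    (q : ℝ) (N : ℕ) :
    cfc (fun x : ℝ => (1 + x) ^ q) X =
      (∑ n ∈ Finset.range (N + 1),
        ((∏ i ∈ Finset.range n, (q - i)) / (n.factorial : ℝ)) • X ^ n) +
      X ^ (N + 1) *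
        cfc (fun x : ℝ =>
          ((∏ i ∈ Finset.range (N + 1), (q - i)) / (N.factorial : ℝ)) *
            ∫ t in (0:ℝ)..1, (1 - t) ^ N * (1 + t * x) ^ (q - N - 1)) X :=
  cfc_eq_sum_smul_pow_add_pow_mul _ _ (N + 1) hX ((continuousOn_rpowRemainder q N).mono hspec)
    fun _ hx ↦ one_add_rpow_eq_sum_add_pow_mul_rpowRemainder (hspec hx) q N
end

section
/- Let q > 0 be a real number and N a natural number. Then the function Φ : ℝ → ℝ defined by Φ(x) = ∫₀¹ (1−t)^N (1 + t·x)^{q−N−1} dt is continuous on the closed half-line [−1, ∞). -/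
open Real MeasureTheory Filter Set

/-- For `q > 0`, the Taylor-remainder amplitude
`Φ(x) = ∫₀¹ (1−t)^N (1+t·x)^{q−N−1} dt` is continuous on `[−1, ∞)`. -/
theorem remainder_amplitude_continuousOn (q : ℝ) (hq : 0 < q) (N : ℕ) :
    ContinuousOn
      (fun x : ℝ => ∫ t in (0:ℝ)..1, (1 - t) ^ N * (1 + t * x) ^ (q - N - 1))
      (Set.Ici (-1 : ℝ)) := by
  intro x₀ hx₀
  have hx₀' : (-1 : ℝ) ≤ x₀ := hx₀
  set e : ℝ := q - N - 1 with he
  set A : ℝ := max x₀ 0 + 1 with hA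
  have hA0 : (0 : ℝ) ≤ A := by positivity
  have hx₀A : x₀ < A := lt_of_le_of_lt (le_max_left _ _) (lt_add_one _)
  set bound : ℝ → ℝ := fun t => (1 - t) ^ (q - 1) + (1 + A) ^ e * (1 - t) ^ N with hbound
  have hne1 : ∀ᵐ t : ℝ, t ≠ (1 : ℝ) := by
    simp only [MeasureTheory.ae_iff, not_not, Set.setOf_eq_eq_singleton]
    exact Real.volume_singleton
  -- key: ContinuousWithinAt is a Tendsto
  unfold ContinuousWithinAt
  apply intervalIntegral.tendsto_integral_filter_of_dominated_convergence bound
  · -- measurability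
    filter_upwards with x
    have : Measurable fun t : ℝ => (1 - t) ^ N * (1 + t * x) ^ e := by fun_prop
    exact this.aestronglyMeasurable
  · -- bound
    have hmem : ∀ᶠ x in nhdsWithin x₀ (Set.Ici (-1 : ℝ)), x ∈ Set.Icc (-1 : ℝ) A := by
      filter_upwards [eventually_mem_nhdsWithin,
        (eventually_lt_nhds hx₀A).filter_mono nhdsWithin_le_nhds] with x h1 h2
      exact ⟨h1, h2.le⟩
    filter_upwards [hmem] with x hx
    filter_upwards [hne1] with t ht1 ht
    rw [Set.uIoc_of_le (by norm_num : (0:ℝ) ≤ 1)] at ht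
    have ht0 : 0 < t := ht.1
    have ht1' : t < 1 := lt_of_le_of_ne ht.2 ht1
    have h1t : 0 < 1 - t := by linarith
    have hbase : 0 < 1 + t * x := by nlinarith [hx.1, ht0.le]
    have hbaseA : 1 + t * x ≤ 1 + A := by nlinarith [hx.2, ht0.le, ht.2, hA0]
    have hbase1t : 1 - t ≤ 1 + t * x := by nlinarith [hx.1, ht0.le]
    have hrpow : (1 + t * x) ^ e ≤ (1 - t) ^ e + (1 + A) ^ e := by
      rcases le_or_gt 0 e with hepos | heneg
      · calc (1 + t * x) ^ e ≤ (1 + A) ^ e :=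
              Real.rpow_le_rpow hbase.le hbaseA hepos
          _ ≤ (1 - t) ^ e + (1 + A) ^ e := le_add_of_nonneg_left (Real.rpow_nonneg h1t.le _)
      · calc (1 + t * x) ^ e ≤ (1 - t) ^ e :=
              Real.rpow_le_rpow_of_nonpos h1t hbase1t heneg.le
          _ ≤ (1 - t) ^ e + (1 + A) ^ e :=
              le_add_of_nonneg_right (Real.rpow_nonneg (by positivity) _)
    have hnonneg : 0 ≤ (1 - t) ^ N * (1 + t * x) ^ e := by positivity
    rw [Real.norm_eq_abs, abs_of_nonneg hnonneg]
    have key : (1 - t) ^ N * (1 + t * x) ^ e ≤ (1 - t) ^ N * ((1 - t) ^ e + (1 + A) ^ e) := by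
      apply mul_le_mul_of_nonneg_left hrpow (by positivity)
    refine key.trans_eq ?_
    have hNe : (1 - t) ^ N * (1 - t) ^ e = (1 - t) ^ (q - 1) := by
      rw [← Real.rpow_natCast (1 - t) N, ← Real.rpow_add h1t]
      congr 1
      simp [he]; ring
    rw [hbound]
    ring_nf
    ring_nf at hNe
    nlinarith [hNe]
  · -- integrability of the bound
    apply IntervalIntegrable.add
    · have h := intervalIntegral.intervalIntegrable_rpow' (r := q - 1)
        (a := (0:ℝ)) (b := (1:ℝ)) (by linarith)
      have h2 := h.comp_sub_left 1
      simpa using h2.symm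
    · exact (Continuous.intervalIntegrable (by fun_prop) 0 1)
  · -- pointwise limit
    filter_upwards [hne1] with t ht1 ht
    rw [Set.uIoc_of_le (by norm_num : (0:ℝ) ≤ 1)] at ht
    have ht1' : t < 1 := lt_of_le_of_ne ht.2 ht1
    have hbase : 0 < 1 + t * x₀ := by nlinarith [ht.1.le]
    have hc : ContinuousAt (fun x : ℝ => (1 - t) ^ N * (1 + t * x) ^ e) x₀ := by
      apply ContinuousAt.mul continuousAt_const
      exact (continuousAt_const.add (continuousAt_id.const_mul t)).rpow_const
        (Or.inl hbase.ne')
    exact hc.tendsto.mono_left nhdsWithin_le_nhds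
end
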